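/- The extended scalar product ⟨·,·⟩ : [0,1]^Ω × [-∞,∞)^Ω → [-∞,∞) is continuous at every pair (f, g) such that either f(ω) > 0 for every ω ∈ Ω or g(ω) is finite for every ω ∈ Ω. -/
import Mathlib

open Filter Topology

variable {Ω : Type*}

/-- The extended scalar product `⟨f,g⟩ = Σ_ω f(ω)·g(ω)`, where `EReal`
multiplication satisfies the stipulation `a·0 = 0·a = 0` for all `a`. -/
noncomputable def eip [Fintype Ω] (f : Ω → ℝ) (g : Ω → EReal) : EReal :=
  ∑ ω, (f ω : EReal) * g ω

private lemma ereal_sum_ne_top {ι : Type*} (s : Finset ι) (a : ι → EReal)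
    (ha : ∀ i ∈ s, a i ≠ ⊤) : ∑ i ∈ s, a i ≠ ⊤ := by
  induction s using Finset.cons_induction with
  | empty => simp
  | cons i s hi ih =>
    rw [Finset.sum_cons]
    exact (EReal.add_lt_top (ha i (Finset.mem_cons_self i s))
      (ih fun j hj => ha j (Finset.mem_cons_of_mem hj))).ne

private lemma ereal_tendsto_sum {α ι : Type*} {l : Filter α} {F : ι → α → EReal}
    {a : ι → EReal} (s : Finset ι) (ha : ∀ i ∈ s, a i ≠ ⊤)
    (hF : ∀ i ∈ s, Tendsto (F i) l (𝓝 (a i))) :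
    Tendsto (fun x => ∑ i ∈ s, F i x) l (𝓝 (∑ i ∈ s, a i)) := by
  induction s using Finset.cons_induction with
  | empty => simpa using tendsto_const_nhds
  | cons i s hi ih =>
    simp only [Finset.sum_cons]
    have h1 := hF i (Finset.mem_cons_self i s)
    have h2 := ih (fun j hj => ha j (Finset.mem_cons_of_mem hj))
      (fun j hj => hF j (Finset.mem_cons_of_mem hj))
    have hsum : ∑ j ∈ s, a j ≠ ⊤ :=
      ereal_sum_ne_top s a fun j hj => ha j (Finset.mem_cons_of_mem hj)
    have hadd := EReal.continuousAt_add (p := (a i, ∑ j ∈ s, a j))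
      (Or.inl (ha i (Finset.mem_cons_self i s))) (Or.inr hsum)
    exact hadd.tendsto.comp (h1.prodMk_nhds h2)

theorem stmt4 [Fintype Ω] [Nonempty Ω] (f : Ω → ℝ) (g : Ω → EReal)
    (hf : ∀ ω, f ω ∈ Set.Icc (0 : ℝ) 1) (hg : ∀ ω, g ω ≠ ⊤)
    (h : (∀ ω, 0 < f ω) ∨ (∀ ω, g ω ≠ ⊥)) :
    ContinuousWithinAt
      (fun fg : (Ω → ℝ) × (Ω → EReal) => eip fg.1 fg.2)
      {fg | (∀ ω, fg.1 ω ∈ Set.Icc (0 : ℝ) 1) ∧ (∀ ω, fg.2 ω ≠ ⊤)}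
      (f, g) := by
  have hterm : ∀ ω : Ω, ((f ω : EReal) * g ω) ≠ ⊤ := by
    intro ω
    rcases eq_or_ne (g ω) ⊥ with hb | hb
    · rcases eq_or_lt_of_le (hf ω).1 with h0 | h0
      · simp [hb, ← h0]
      · rw [hb, EReal.mul_bot_of_pos (by exact_mod_cast h0)]; simp
    · lift g ω to ℝ using ⟨hg ω, hb⟩ with y
      exact (EReal.coe_mul (f ω) y ▸ EReal.coe_ne_top _)
  have hcont : ContinuousAt (fun fg : (Ω → ℝ) × (Ω → EReal) => eip fg.1 fg.2) (f, g) := by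
    have key : Tendsto (fun fg : (Ω → ℝ) × (Ω → EReal) => ∑ ω, (fg.1 ω : EReal) * fg.2 ω)
        (𝓝 (f, g)) (𝓝 (∑ ω, (f ω : EReal) * g ω)) := by
      apply ereal_tendsto_sum (F := fun ω (fg : (Ω → ℝ) × (Ω → EReal)) => ((fg.1 ω : EReal)) * fg.2 ω)
        (a := fun ω => (f ω : EReal) * g ω) Finset.univ (fun ω _ => hterm ω)
      intro ω _
      have hmul : ContinuousAt (fun p : EReal × EReal => p.1 * p.2)
          (((f ω : EReal)), g ω) := by
        apply EReal.continuousAt_mul (p := ((f ω : EReal), g ω))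
        · rcases h with h | h
          · exact Or.inl (by simpa using (h ω).ne')
          · exact Or.inr (h ω)
        · exact Or.inr (hg ω)
        · exact Or.inl (by simp)
        · exact Or.inl (by simp)
      have hpair : ContinuousAt
          (fun fg : (Ω → ℝ) × (Ω → EReal) => ((fg.1 ω : EReal), fg.2 ω)) (f, g) := by
        apply ContinuousAt.prodMk
        · exact (continuous_coe_real_ereal.comp
            ((continuous_apply ω).comp continuous_fst)).continuousAt
        · exact ((continuous_apply ω).comp continuous_snd).continuousAt
      exact ContinuousAt.comp (x := (f, g)) hmul hpair
    exact key
  exact hcont.continuousWithinAt
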